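/- Let F be the field ℝ or ℂ and let X be a separable normed F-vector space whose algebraic dimension equals 2^ℵ₀. Then the set 𝒵_cl(X) of all topologically closed linear subspaces Z ≤ X with dim Z = dim X and dim(X/Z) < ℵ₀ has cardinality equal to the cardinality of X, namely 2^ℵ₀; moreover the set 𝒲(X) of all finite-dimensional subspaces of X also has cardinality 2^ℵ₀. -/

import Mathlib

/-!
A separable metric space is second countable, and an open set of a second countable space is the
union of the basic open sets it contains; so there are at most `2 ^ ℵ₀` open sets, hence closed
sets, closed subspaces and (as singletons are closed) points. Conversely, a Hamel basis of
cardinality `𝔠` spans `𝔠` distinct lines, and for independent `x, y` the functionals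
`a • x + b • y ↦ b - t * a` extend continuously to `X` (Hahn–Banach); their kernels are `𝔠` distinct
closed hyperplanes, which have full dimension because `X` is infinite-dimensional.
-/

open Cardinal

universe u v

section SecondCountable

variable (X : Type u) [TopologicalSpace X] [SecondCountableTopology X]

theorem card_isOpen_le_continuum : #{s : Set X // IsOpen s} ≤ 𝔠 := by
  obtain ⟨B, hBc, -, hB⟩ := TopologicalSpace.exists_countable_basis X
  have hinj : Function.Injective fun s : {s : Set X // IsOpen s} ↦ {U : B | (U : Set X) ⊆ s} := by
    intro s t hst
    refine Subtype.ext (hB.eq_of_forall_subset_iff s.2 t.2 fun U hU ↦ ?_)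
    simpa using Set.ext_iff.mp hst ⟨U, hU⟩
  calc #{s : Set X // IsOpen s} ≤ #(Set B) := mk_le_of_injective hinj
    _ = 2 ^ #B := mk_set
    _ ≤ 2 ^ ℵ₀ := power_le_power_left two_ne_zero (mk_le_aleph0_iff.mpr hBc.to_subtype)
    _ = 𝔠 := two_power_aleph0

theorem card_isClosed_le_continuum : #{s : Set X // IsClosed s} ≤ 𝔠 := by
  let compl : {s : Set X // IsClosed s} → {s : Set X // IsOpen s} := fun s ↦ ⟨sᶜ, s.2.isOpen_compl⟩
  refine (mk_le_of_injective (f := compl) fun s t hst ↦ ?_).trans (card_isOpen_le_continuum X)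
  exact Subtype.ext (compl_injective (congrArg Subtype.val hst))

theorem card_le_continuum_of_secondCountableTopology [T1Space X] : #X ≤ 𝔠 :=
  (mk_le_of_injective (f := fun x ↦ (⟨{x}, isClosed_singleton⟩ : {s : Set X // IsClosed s}))
    fun _ _ hxy ↦ Set.singleton_injective (congrArg Subtype.val hxy)).trans
    (card_isClosed_le_continuum X)

end SecondCountable

theorem card_isClosed_submodule_le_continuum (R : Type*) (M : Type u) [Semiring R]
    [AddCommMonoid M] [Module R M] [TopologicalSpace M] [SecondCountableTopology M] :
    #{N : Submodule R M // IsClosed (N : Set M)} ≤ 𝔠 :=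
  (mk_le_of_injective (f := fun N ↦ (⟨N.1, N.2⟩ : {s : Set M // IsClosed s}))
    fun _ _ h ↦ Subtype.ext (SetLike.coe_injective (congrArg Subtype.val h))).trans
    (card_isClosed_le_continuum M)

section DivisionRing

variable {K : Type u} {V : Type v} [DivisionRing K] [AddCommGroup V] [Module K V]

theorem rank_le_card_finiteRank_submodule :
    Module.rank K V ≤ #{W : Submodule K V // Module.rank K W < ℵ₀} := by
  let b := Module.Basis.ofVectorSpace K V
  rw [← b.mk_eq_rank'']
  refine mk_le_of_injective (f := fun i ↦ ⟨K ∙ b i, Module.rank_lt_aleph0 K _⟩) fun i j hij ↦ ?_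
  by_contra hne
  have hspan : K ∙ b i = K ∙ b j := congrArg Subtype.val hij
  have hmem : b i ∈ Submodule.span K (b '' {j}) := by
    rw [Set.image_singleton, ← hspan]
    exact Submodule.mem_span_singleton_self _
  exact b.linearIndependent.notMem_span_image (Set.notMem_singleton_iff.mpr hne) hmem

theorem Submodule.rank_eq_of_rank_quotient_lt_aleph0 (Z : Submodule K V)
    (hV : ℵ₀ ≤ Module.rank K V) (hZ : Module.rank K (V ⧸ Z) < ℵ₀) :
    Module.rank K Z = Module.rank K V := by
  have hsum := rank_quotient_add_rank_of_divisionRing Z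
  have hinf : ℵ₀ ≤ Module.rank K Z := by
    by_contra! hlt
    exact (add_lt_aleph0 hZ hlt).not_ge (hsum ▸ hV)
  rw [← hsum, add_eq_right hinf (hZ.le.trans hinf)]

end DivisionRing

theorem LinearMap.rank_quotient_ker_lt_aleph0 {K V : Type*} [Field K] [AddCommGroup V]
    [Module K V] (f : Module.Dual K V) : Module.rank K (V ⧸ LinearMap.ker f) < ℵ₀ := by
  have : Module.Finite K (V ⧸ LinearMap.ker f) := .equiv f.quotKerEquivRange.symm
  exact Module.rank_lt_aleph0 K _

section SeparatingDual

variable {K : Type u} {V : Type v} [Field K] [TopologicalSpace K] [IsTopologicalRing K]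
  [AddCommGroup V] [TopologicalSpace V] [Module K V] [SeparatingDual K V]

theorem SeparatingDual.exists_strongDual_apply_add_smul {x y : V}
    (hxy : LinearIndependent K ![x, y]) :
    ∃ φ : K → StrongDual K V, ∀ s t, φ t (x + s • y) = s - t := by
  let L := Fintype.linearCombination K ![x, y]
  have hL : ∀ s, L ![1, s] = x + s • y := by simp [L, Fintype.linearCombination_apply]
  have hext := SeparatingDual.dualMap_surjective_iff.mpr hxy.fintypeLinearCombination_injective
  choose φ hφ using fun t : K ↦ hext (LinearMap.proj 1 - t • LinearMap.proj 0)
  refine ⟨φ, fun s t ↦ ?_⟩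
  have := LinearMap.congr_fun (hφ t) ![1, s]
  simp only [Function.comp_apply, LinearMap.dualMap_apply] at this
  rw [← hL]
  simpa using this

theorem lift_card_le_card_closed_fullRank_finiteCodim [T1Space K] (hV : ℵ₀ ≤ Module.rank K V) :
    lift.{v} #K ≤ lift.{u} #{Z : Submodule K V // IsClosed (Z : Set V) ∧
      Module.rank K Z = Module.rank K V ∧ Module.rank K (V ⧸ Z) < ℵ₀} := by
  have : Nontrivial V := rank_pos_iff_nontrivial.mp (aleph0_pos.trans_le hV)
  obtain ⟨x, hx⟩ := exists_ne (0 : V)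
  obtain ⟨y, hxy⟩ := exists_linearIndependent_pair_of_one_lt_rank (one_lt_aleph0.trans_le hV) hx
  obtain ⟨φ, hφ⟩ := SeparatingDual.exists_strongDual_apply_add_smul hxy
  have hcodim t := LinearMap.rank_quotient_ker_lt_aleph0 (φ t : Module.Dual K V)
  refine lift_mk_le_lift_mk_of_injective
    (f := fun t ↦ ⟨LinearMap.ker (φ t : Module.Dual K V), (φ t).isClosed_ker,
      (LinearMap.ker _).rank_eq_of_rank_quotient_lt_aleph0 hV (hcodim t), hcodim t⟩)
    fun s t hst ↦ ?_
  have hker : LinearMap.ker (φ s : Module.Dual K V) = LinearMap.ker (φ t : Module.Dual K V) :=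
    congrArg Subtype.val hst
  have hmem : x + s • y ∈ LinearMap.ker (φ t : Module.Dual K V) := by
    rw [← hker, LinearMap.mem_ker, ContinuousLinearMap.coe_coe, hφ, sub_self]
  rw [LinearMap.mem_ker, ContinuousLinearMap.coe_coe, hφ] at hmem
  exact sub_eq_zero.mp hmem

end SeparatingDual

/-- If `X` is a separable normed space over `F ∈ {ℝ, ℂ}` of algebraic
dimension exactly `2 ^ ℵ₀`, then the set `𝒵_cl(X)` of topologically closed linear
subspaces of full algebraic dimension and finite codimension has cardinality
`|X| = 2 ^ ℵ₀`, and the set `𝒲(X)` of finite-dimensional subspaces of `X` also has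
cardinality `2 ^ ℵ₀`. -/
theorem stmt10 (F : Type) [RCLike F] (X : Type) [NormedAddCommGroup X] [NormedSpace F X]
    [TopologicalSpace.SeparableSpace X]
    (h : Module.rank F X = Cardinal.continuum) :
    #{Z : Submodule F X // IsClosed (Z : Set X) ∧
        Module.rank F Z = Module.rank F X ∧ Module.rank F (X ⧸ Z) < ℵ₀} = #X ∧
    #X = Cardinal.continuum ∧
    #{W : Submodule F X // Module.rank F W < ℵ₀} = Cardinal.continuum := by
  have hX : #X = 𝔠 :=
    (card_le_continuum_of_secondCountableTopology X).antisymm (h ▸ rank_le_card F X)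
  have hclosed := card_isClosed_submodule_le_continuum F X
  refine ⟨hX ▸ le_antisymm ?_ ?_, hX, le_antisymm ?_ ?_⟩
  · exact (mk_subtype_mono fun _ hZ ↦ hZ.1).trans hclosed
  · have hF := lift_card_le_card_closed_fullRank_finiteCodim (K := F) (V := X)
      (h ▸ aleph0_le_continuum)
    rw [lift_id, lift_id] at hF
    exact (continuum_le_cardinal_of_nontriviallyNormedField F).trans hF
  · refine (mk_subtype_mono fun W hW ↦ ?_).trans hclosed
    have := Module.rank_lt_aleph0_iff.mp hW
    exact W.closed_of_finiteDimensional
  · exact h ▸ rank_le_card_finiteRank_submodule
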